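/- arXiv:1711.09690 — 2 statements merged into one kernel-verified Lean document; each statement's English description precedes it below -/
import Mathlib

section
/- Let α > 0, let R be a finite index set, and for each r ∈ R let w_r > 0 and B_r > 0. Define g(x) = ∑_{r ∈ R} g_r(x_r), where g_r(x) = −w_r x^{1−α}/(1−α) if α ≠ 1 and g_r(x) = −w_r log x if α = 1, so that ∂g/∂x_r (x) = −w_r x_r^{−α}. Then for all x, y ∈ ℝ^R with 0 < x_r ≤ B_r and 0 < y_r ≤ B_r for every r, (∇g(x) − ∇g(y))ᵀ(x − y) ≥ α (min_{r ∈ R} w_r / B_r^{α+1}) ‖x − y‖², where ‖·‖ is the Euclidean norm; i.e., g is strongly convex on the box ∏_r (0, B_r] with modulus σ = α min_r w_r/B_r^{α+1}. -/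
open scoped BigOperators

/-- Core MVT-style inequality: for `0 < y ≤ x ≤ B`,
`α * B^(-(α+1)) * (x - y) ≤ y^(-α) - x^(-α)`. -/
lemma alphafair_core (α B : ℝ) (hα : 0 < α) (hB : 0 < B) {y x : ℝ}
    (hy : 0 < y) (hxy : y ≤ x) (hx : x ≤ B) :
    α * B ^ (-(α + 1)) * (x - y) ≤ y ^ (-α) - x ^ (-α) := by
  set c : ℝ := α * B ^ (-(α + 1)) with hc
  set f : ℝ → ℝ := fun t => t ^ (-α) + c * t with hf
  have hderiv : ∀ t ∈ interior (Set.Icc y x),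
      HasDerivAt f (-α * t ^ (-α - 1) + c) t := by
    intro t ht
    rw [interior_Icc] at ht
    have ht0 : 0 < t := lt_of_lt_of_le hy ht.1.le
    have h1 : HasDerivAt (fun t : ℝ => t ^ (-α)) (-α * t ^ (-α - 1)) t :=
      Real.hasDerivAt_rpow_const (Or.inl ht0.ne')
    have h2 : HasDerivAt (fun t : ℝ => c * t) c t := by
      simpa using (hasDerivAt_id t).const_mul c
    exact h1.add h2
  have hmono : AntitoneOn f (Set.Icc y x) := by
    apply antitoneOn_of_deriv_nonpos (convex_Icc y x)
    · apply ContinuousOn.add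
      · exact ContinuousOn.rpow_const continuousOn_id (fun t ht => Or.inl
          (ne_of_gt (lt_of_lt_of_le hy ht.1)))
      · exact (continuous_const.mul continuous_id).continuousOn
    · intro t ht
      exact (hderiv t ht).differentiableAt.differentiableWithinAt
    · intro t ht
      rw [(hderiv t ht).deriv]
      rw [interior_Icc] at ht
      have ht0 : 0 < t := lt_of_lt_of_le hy ht.1.le
      have htB : t ≤ B := le_trans ht.2.le hx
      have hle : B ^ (-(α + 1)) ≤ t ^ (-(α + 1)) :=
        Real.rpow_le_rpow_of_nonpos ht0 htB (by linarith)
      have : c ≤ α * t ^ (-(α + 1)) := by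
        rw [hc]; exact mul_le_mul_of_nonneg_left hle hα.le
      have heq : t ^ (-(α + 1)) = t ^ (-α - 1) := by ring_nf
      nlinarith [this, heq]
  have := hmono (Set.left_mem_Icc.mpr hxy) (Set.right_mem_Icc.mpr hxy) hxy
  simp only [hf] at this
  linarith

/-- 1D version of the strong-convexity inequality. -/
lemma alphafair_1d (α wr Br : ℝ) (hα : 0 < α) (hw : 0 < wr) (hB : 0 < Br)
    {xr yr : ℝ} (hx0 : 0 < xr) (hxB : xr ≤ Br) (hy0 : 0 < yr) (hyB : yr ≤ Br) :
    α * (wr / Br ^ (α + 1)) * (xr - yr) ^ 2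
      ≤ ((-wr * xr ^ (-α)) - (-wr * yr ^ (-α))) * (xr - yr) := by
  have hBr : Br ^ (-(α + 1)) = (Br ^ (α + 1))⁻¹ := Real.rpow_neg hB.le _
  have hBpos : (0:ℝ) < Br ^ (α + 1) := Real.rpow_pos_of_pos hB _
  rcases le_total yr xr with h | h
  · have hcore := alphafair_core α Br hα hB hy0 h hxB
    have hsub : 0 ≤ xr - yr := by linarith
    have := mul_le_mul_of_nonneg_right hcore hsub
    have hdiv : wr / Br ^ (α + 1) = wr * Br ^ (-(α + 1)) := by
      rw [hBr]; ring
    rw [hdiv]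
    nlinarith [this, mul_le_mul_of_nonneg_left this hw.le]
  · have hcore := alphafair_core α Br hα hB hx0 h hyB
    have hsub : 0 ≤ yr - xr := by linarith
    have := mul_le_mul_of_nonneg_right hcore hsub
    have hdiv : wr / Br ^ (α + 1) = wr * Br ^ (-(α + 1)) := by
      rw [hBr]; ring
    rw [hdiv]
    nlinarith [this, mul_le_mul_of_nonneg_left this hw.le]

/-- (Fact 3 of the paper, strong-convexity part.) For `α > 0`, a finite
index set `R`, weights `w_r > 0` and bounds `B_r > 0`, the separable α-fair cost
`g(x) = ∑_r g_r(x_r)` with gradient components `−w_r x_r^{−α}` is strongly convex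
on the box `∏_r (0, B_r]` with modulus `σ = α min_r w_r / B_r^{α+1}`:
`(∇g(x) − ∇g(y))ᵀ(x − y) ≥ σ ‖x − y‖²`. -/
theorem separable_alphafair_strong_convexity {R : Type*} [Fintype R] [Nonempty R]
    (α : ℝ) (hα : 0 < α) (w B : R → ℝ) (hw : ∀ r, 0 < w r) (hB : ∀ r, 0 < B r)
    (x y : R → ℝ)
    (hx : ∀ r, 0 < x r ∧ x r ≤ B r) (hy : ∀ r, 0 < y r ∧ y r ≤ B r) :
    α * (Finset.univ.inf' Finset.univ_nonempty (fun r => w r / B r ^ (α + 1)))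
        * ∑ r, (x r - y r) ^ 2
      ≤ ∑ r, ((-w r * x r ^ (-α)) - (-w r * y r ^ (-α))) * (x r - y r) := by
  set σ := Finset.univ.inf' Finset.univ_nonempty (fun r => w r / B r ^ (α + 1)) with hσ
  rw [Finset.mul_sum]
  apply Finset.sum_le_sum
  intro r _
  have h1 : σ ≤ w r / B r ^ (α + 1) := Finset.inf'_le _ (Finset.mem_univ r)
  have h2 : α * σ * (x r - y r) ^ 2 ≤ α * (w r / B r ^ (α + 1)) * (x r - y r) ^ 2 := by
    have := mul_le_mul_of_nonneg_left h1 hα.le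
    nlinarith [sq_nonneg (x r - y r)]
  exact le_trans h2 (alphafair_1d α (w r) (B r) hα (hw r) (hB r)
    (hx r).1 (hx r).2 (hy r).1 (hy r).2)
end

section
/- Let α > 0, let w ∈ ℝⁿ have all components w_r > 0, let F ⊆ ℝ≥0ⁿ be a convex set, and let x* ∈ F have all components x*_r > 0. Then the following are equivalent: (i) for every x ∈ F, ∑_{r=1}^n w_r (x_r − x*_r)/x*_r^α ≤ 0; (ii) x* maximizes the α-fair utility among all strictly positive points of F, i.e., f^α(x*) ≥ f^α(x) for every x ∈ F with all components x_r > 0, where f^α(x) = ∑_r w_r x_r^{1−α}/(1−α) if α ≠ 1 and f^α(x) = ∑_r w_r log x_r if α = 1. -/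
/-!
The coordinate utility `alphaFair α` is concave on `(0, ∞)` with derivative `t ↦ (t ^ α)⁻¹`,
so `∑ r, w r * (x r - x* r) / x* r ^ α` is the derivative of the utility at `x*` in the direction
`x - x*`. Concavity keeps the utility below its tangent plane at `x*`, which gives (i) ⇒ (ii).
Conversely, if `x*` maximizes the utility on the strictly positive points of `F`, Fermat's rule
applies along the open segment from `x*` to `x`, which stays strictly positive even where `x`
vanishes, so the directional derivative is nonpositive.
-/

open Set Real

lemma ConcaveOn.sub_le_mul_sub_of_hasDerivAt {S : Set ℝ} {f : ℝ → ℝ} {x y f' : ℝ}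
    (hf : ConcaveOn ℝ S f) (hx : x ∈ S) (hy : y ∈ S) (hf' : HasDerivAt f f' x) :
    f y - f x ≤ f' * (y - x) := by
  rcases lt_trichotomy x y with hxy | rfl | hyx
  · have := hf.slope_le_of_hasDerivAt hx hy hxy hf'
    rw [slope_def_field, div_le_iff₀ (sub_pos.2 hxy)] at this
    exact this
  · simp
  · have := hf.le_slope_of_hasDerivAt hy hx hyx hf'
    rw [slope_def_field, le_div_iff₀ (sub_pos.2 hyx)] at this
    linarith

noncomputable def alphaFair (α t : ℝ) : ℝ :=
  if α = 1 then log t else t ^ (1 - α) / (1 - α)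

lemma hasDerivAt_alphaFair (α : ℝ) {t : ℝ} (ht : 0 < t) :
    HasDerivAt (alphaFair α) (t ^ α)⁻¹ t := by
  unfold alphaFair
  split_ifs with hα
  · simpa [hα] using hasDerivAt_log ht.ne'
  · have hα' : 1 - α ≠ 0 := sub_ne_zero.2 (Ne.symm hα)
    refine ((hasDerivAt_rpow_const (p := 1 - α) (Or.inl ht.ne')).div_const (1 - α)).congr_deriv ?_
    rw [sub_sub_cancel_left, rpow_neg ht.le]
    field_simp

lemma concaveOn_alphaFair {α : ℝ} (hα : 0 ≤ α) : ConcaveOn ℝ (Ioi 0) (alphaFair α) := by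
  have hderiv : ∀ t ∈ Ioi (0 : ℝ), HasDerivAt (alphaFair α) (t ^ α)⁻¹ t :=
    fun t ht => hasDerivAt_alphaFair α ht
  refine AntitoneOn.concaveOn_of_deriv (convex_Ioi 0)
    (fun t ht => (hderiv t ht).continuousAt.continuousWithinAt) ?_ ?_ <;> rw [interior_Ioi]
  · exact fun t ht => (hderiv t ht).differentiableAt.differentiableWithinAt
  · intro s hs t ht hst
    rw [(hderiv s hs).deriv, (hderiv t ht).deriv]
    exact inv_anti₀ (rpow_pos_of_pos hs α) (rpow_le_rpow (le_of_lt hs) hst hα)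

lemma alphaFair_sub_le {α s t : ℝ} (hα : 0 ≤ α) (hs : 0 < s) (ht : 0 < t) :
    alphaFair α t - alphaFair α s ≤ (t - s) / s ^ α := by
  rw [div_eq_inv_mul]
  exact (concaveOn_alphaFair hα).sub_le_mul_sub_of_hasDerivAt hs ht (hasDerivAt_alphaFair α hs)

lemma openSegment_subset_setOf_pos {ι : Type*} {x y : ι → ℝ} (hx : ∀ r, 0 < x r)
    (hy : ∀ r, 0 ≤ y r) :
    openSegment ℝ x y ⊆ {z | ∀ r, 0 < z r} := by
  rintro _ ⟨a, b, ha, hb, -, rfl⟩ r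
  simp only [Pi.add_apply, Pi.smul_apply, smul_eq_mul]
  exact add_pos_of_pos_of_nonneg (mul_pos ha (hx r)) (mul_nonneg hb.le (hy r))

section FairUtility

variable {ι : Type*} [Fintype ι]

noncomputable def fairUtility (α : ℝ) (w x : ι → ℝ) : ℝ :=
  ∑ r, w r * alphaFair α (x r)

lemma fairUtility_sub_le {α : ℝ} {w x y : ι → ℝ} (hα : 0 ≤ α) (hw : ∀ r, 0 ≤ w r)
    (hx : ∀ r, 0 < x r) (hy : ∀ r, 0 < y r) :
    fairUtility α w y - fairUtility α w x ≤ ∑ r, w r * (y r - x r) / x r ^ α := by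
  rw [fairUtility, fairUtility, ← Finset.sum_sub_distrib]
  gcongr with r
  rw [← mul_sub, mul_div_assoc]
  exact mul_le_mul_of_nonneg_left (alphaFair_sub_le hα (hx r) (hy r)) (hw r)

lemma hasFDerivAt_fairUtility (α : ℝ) (w : ι → ℝ) {x : ι → ℝ} (hx : ∀ r, 0 < x r) :
    HasFDerivAt (fairUtility α w)
      (∑ r, (w r / x r ^ α) • ContinuousLinearMap.proj (R := ℝ) (φ := fun _ : ι => ℝ) r) x := by
  refine HasFDerivAt.fun_sum fun r _ => ?_
  have hcoord := hasFDerivAt_apply (𝕜 := ℝ) (F' := fun _ : ι => ℝ) r x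
  have := ((hasDerivAt_alphaFair α (hx r)).comp_hasFDerivAt x hcoord).const_mul (w r)
  exact this.congr_fderiv (by rw [smul_smul, div_eq_mul_inv])

lemma sum_mul_sub_div_rpow_nonpos_of_isMaxOn {α : ℝ} {w x y : ι → ℝ} {S : Set (ι → ℝ)}
    (hx : ∀ r, 0 < x r) (hmax : IsMaxOn (fairUtility α w) S x)
    (hseg : openSegment ℝ x y ⊆ S) :
    ∑ r, w r * (y r - x r) / x r ^ α ≤ 0 := by
  have := (hmax.localize.on_subset le_rfl).hasFDerivWithinAt_nonpos
    (hasFDerivAt_fairUtility α w hx).hasFDerivWithinAt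
    (sub_mem_posTangentConeAt_of_openSegment_subset hseg)
  simpa [mul_comm, mul_div_assoc, div_mul_eq_mul_div] using this

lemma ite_sum_eq_fairUtility (α : ℝ) (w x : ι → ℝ) :
    (if α = 1 then ∑ r, w r * log (x r) else ∑ r, w r * x r ^ (1 - α) / (1 - α)) =
      fairUtility α w x := by
  unfold fairUtility alphaFair
  split_ifs <;> simp [mul_div_assoc]

end FairUtility

/-- (Mo–Walrand characterization of `(w,α)`-fairness.) For `α > 0`,
positive weights `w`, a convex set `F` contained in the nonnegative orthant, and a
point `x* ∈ F` with strictly positive components, the following are equivalent: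
(i) `∑_r w_r (x_r − x*_r)/x*_r^α ≤ 0` for all `x ∈ F`;
(ii) `x*` maximizes the α-fair utility `f^α` among strictly positive points of `F`,
where `f^α(x) = ∑_r w_r x_r^{1−α}/(1−α)` if `α ≠ 1` and `∑_r w_r log x_r` if `α = 1`. -/
theorem mo_walrand_characterization (n : ℕ) (α : ℝ) (hα : 0 < α)
    (w : Fin n → ℝ) (hw : ∀ r, 0 < w r)
    (F : Set (Fin n → ℝ)) (hFconv : Convex ℝ F) (hFnn : ∀ x ∈ F, ∀ r, 0 ≤ x r)
    (xs : Fin n → ℝ) (hxsF : xs ∈ F) (hxs_pos : ∀ r, 0 < xs r) :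
    (∀ x ∈ F, ∑ r, w r * (x r - xs r) / xs r ^ α ≤ 0) ↔
    (∀ x ∈ F, (∀ r, 0 < x r) →
      (if α = 1 then ∑ r, w r * Real.log (x r)
        else ∑ r, w r * x r ^ (1 - α) / (1 - α))
      ≤ (if α = 1 then ∑ r, w r * Real.log (xs r)
        else ∑ r, w r * xs r ^ (1 - α) / (1 - α))) := by
  simp only [ite_sum_eq_fairUtility]
  constructor
  · intro hgrad x hx hx_pos
    exact sub_nonpos.1 <|
      (fairUtility_sub_le hα.le (fun r => (hw r).le) hxs_pos hx_pos).trans (hgrad x hx)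
  · intro hmax x hx
    refine sum_mul_sub_div_rpow_nonpos_of_isMaxOn hxs_pos
      (S := F ∩ {z | ∀ r, 0 < z r}) (fun y hy => hmax y hy.1 hy.2) ?_
    exact subset_inter (hFconv.openSegment_subset hxsF hx)
      (openSegment_subset_setOf_pos hxs_pos (hFnn x hx))
end
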